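/- Let (F₁, F₂) and (G₁, G₂) be the CHFIS pairs, with the same parameters α_{n,m}, β_{n,m}, γ_{n,m}, for generalized interpolation data Δ = {(x_i, y_j, z_{i,j}, t_{i,j})} and Δ* = {(x*_i, y*_j, z_{i,j}, t_{i,j})} respectively, where the knots satisfy the invariance-of-ratio condition and S* ⊆ S. Suppose M̄ ≥ 0 and δ ∈ (0,1] are such that |F₁(X) − F₁(X̄)| ≤ M̄ · d_M(X,X̄)^δ and |F₂(X) − F₂(X̄)| ≤ M̄ · d_M(X,X̄)^δ for all X, X̄ ∈ S. Then sup_{(x,y) ∈ S*} |F₁(x,y) − G₁(x,y)| ≤ M̄ · [2βγ/((1−α)(1−γ)) + (1+α)/(1−α)] · max{ (|x_n − x*_n| + |y_m − y*_m|)^δ : 0 ≤ n ≤ N, 0 ≤ m ≤ M }, where α = max_{n,m}|α_{n,m}|, β = max_{n,m}|β_{n,m}|, γ = max_{n,m}|γ_{n,m}|. -/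

import Mathlib

open Real Set

noncomputable section

/-- `z_eva` (resp. `t_eva`) from the paper: `z N M - z N 0 - z 0 M + z 0 0`. -/
def eva (N M : ℕ) (z : ℕ → ℕ → ℝ) : ℝ := z N M - z N 0 - z 0 M + z 0 0

/-- The coefficient `g_{n,m}` determined by the join-up conditions. -/
def gCoef (N M : ℕ) (x y : ℕ → ℝ) (z t : ℕ → ℕ → ℝ) (a b : ℕ → ℕ → ℝ) (n m : ℕ) : ℝ :=
  (z (n-1) (m-1) - z (n-1) m - z n (m-1) + z n m
    - a n m * eva N M z - b n m * eva N M t) / ((x 0 - x N) * (y 0 - y M))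

/-- The coefficient `e_{n,m}`. -/
def eCoef (N M : ℕ) (x y : ℕ → ℝ) (z t : ℕ → ℕ → ℝ) (a b : ℕ → ℕ → ℝ) (n m : ℕ) : ℝ :=
  (z (n-1) (m-1) - z n (m-1) - a n m * (z 0 0 - z N 0) - b n m * (t 0 0 - t N 0)
    - gCoef N M x y z t a b n m * (x 0 - x N) * y 0) / (x 0 - x N)

/-- The coefficient `f_{n,m}`. -/
def fCoef (N M : ℕ) (x y : ℕ → ℝ) (z t : ℕ → ℕ → ℝ) (a b : ℕ → ℕ → ℝ) (n m : ℕ) : ℝ :=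
  (z (n-1) (m-1) - z (n-1) m - a n m * (z 0 0 - z 0 M) - b n m * (t 0 0 - t 0 M)
    - gCoef N M x y z t a b n m * (y 0 - y M) * x 0) / (y 0 - y M)

/-- The coefficient `k_{n,m}`. -/
def kCoef (N M : ℕ) (x y : ℕ → ℝ) (z t : ℕ → ℕ → ℝ) (a b : ℕ → ℕ → ℝ) (n m : ℕ) : ℝ :=
  z n m - eCoef N M x y z t a b n m * x N - fCoef N M x y z t a b n m * y M
    - a n m * z N M - b n m * t N M - gCoef N M x y z t a b n m * x N * y M

/-- `p_{n,m}(X,Y) = e_{n,m} X + f_{n,m} Y + g_{n,m} X Y + k_{n,m}`. -/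
def pMap (N M : ℕ) (x y : ℕ → ℝ) (z t : ℕ → ℕ → ℝ) (a b : ℕ → ℕ → ℝ) (n m : ℕ)
    (X Y : ℝ) : ℝ :=
  eCoef N M x y z t a b n m * X + fCoef N M x y z t a b n m * Y
    + gCoef N M x y z t a b n m * X * Y + kCoef N M x y z t a b n m

/-- `q_{n,m}(X,Y) = ẽ_{n,m} X + f̃_{n,m} Y + g̃_{n,m} X Y + k̃_{n,m}`; it is `p` built from the
data `t` with parameters `γ` and `0`. -/
def qMap (N M : ℕ) (x y : ℕ → ℝ) (t : ℕ → ℕ → ℝ) (c : ℕ → ℕ → ℝ) (n m : ℕ) (X Y : ℝ) : ℝ :=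
  pMap N M x y t t c (fun _ _ => 0) n m X Y

/-- `φ_n` (resp. `ψ_m`): the affine map of `[x₀, x_N]` onto `[x_{n-1}, x_n]`. -/
def phiMap (N : ℕ) (x : ℕ → ℝ) (n : ℕ) (X : ℝ) : ℝ :=
  x (n-1) + (x n - x (n-1)) * (X - x 0) / (x N - x 0)

/-- Validity of generalized interpolation data: `N, M ≥ 1`, strictly increasing knots,
`|α_{n,m}| < 1` and `|β_{n,m}| + |γ_{n,m}| < 1`. -/
structure DataOK (N M : ℕ) (x y : ℕ → ℝ) (a b c : ℕ → ℕ → ℝ) : Prop where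
  hN : 1 ≤ N
  hM : 1 ≤ M
  hx : ∀ i < N, x i < x (i+1)
  hy : ∀ j < M, y j < y (j+1)
  ha : ∀ n m, 1 ≤ n → n ≤ N → 1 ≤ m → m ≤ M → |a n m| < 1
  hbc : ∀ n m, 1 ≤ n → n ≤ N → 1 ≤ m → m ≤ M → |b n m| + |c n m| < 1

/-- `(F₁, F₂)` is the CHFIS pair for the generalized interpolation data. -/
def IsCHFIS (N M : ℕ) (x y : ℕ → ℝ) (z t : ℕ → ℕ → ℝ) (a b c : ℕ → ℕ → ℝ)
    (F₁ F₂ : ℝ → ℝ → ℝ) : Prop :=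
  ContinuousOn (fun P : ℝ × ℝ => F₁ P.1 P.2) (Icc (x 0) (x N) ×ˢ Icc (y 0) (y M)) ∧
  ContinuousOn (fun P : ℝ × ℝ => F₂ P.1 P.2) (Icc (x 0) (x N) ×ˢ Icc (y 0) (y M)) ∧
  (∀ i ≤ N, ∀ j ≤ M, F₁ (x i) (y j) = z i j ∧ F₂ (x i) (y j) = t i j) ∧
  ∀ n m, 1 ≤ n → n ≤ N → 1 ≤ m → m ≤ M →
    ∀ X ∈ Icc (x 0) (x N), ∀ Y ∈ Icc (y 0) (y M),
      F₁ (phiMap N x n X) (phiMap M y m Y)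
        = a n m * F₁ X Y + b n m * F₂ X Y + pMap N M x y z t a b n m X Y ∧
      F₂ (phiMap N x n X) (phiMap M y m Y)
        = c n m * F₂ X Y + qMap N M x y t c n m X Y

/-- The invariance-of-ratio condition between the knots `x, y` and the knots `xs, ys`. -/
def RatioInv (N M : ℕ) (x y xs ys : ℕ → ℝ) : Prop :=
  (∀ n, 1 ≤ n → n ≤ N → (x 0 - x N) / (xs 0 - xs N) = (x (n-1) - x n) / (xs (n-1) - xs n)) ∧
  (∀ m, 1 ≤ m → m ≤ M → (y 0 - y M) / (ys 0 - ys M) = (y (m-1) - y m) / (ys (m-1) - ys m))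

/-- `T : [x₀, x_N] → [xs₀, xs_N]` is the cell-wise affine transfer map, sending
`[x_{n-1}, x_n]` affinely onto `[xs_{n-1}, xs_n]` (one coordinate of `R` resp. `K`). -/
def IsTransfer (N : ℕ) (x xs : ℕ → ℝ) (T : ℝ → ℝ) : Prop :=
  ∀ n, 1 ≤ n → n ≤ N → ∀ X ∈ Icc (x (n-1)) (x n),
    T X = xs (n-1) + (xs n - xs (n-1)) * (X - x (n-1)) / (x n - x (n-1))

/-- `max { |a n m| : 1 ≤ n ≤ N, 1 ≤ m ≤ M }` (as an `sSup`). -/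
def supParam (N M : ℕ) (a : ℕ → ℕ → ℝ) : ℝ :=
  sSup {v : ℝ | ∃ n m, 1 ≤ n ∧ n ≤ N ∧ 1 ≤ m ∧ m ≤ M ∧ v = |a n m|}

/-- `max { (|x_n - xs_n| + |y_m - ys_m|)^δ : 0 ≤ n ≤ N, 0 ≤ m ≤ M }` (as an `sSup`). -/
def supKnotDiff (N M : ℕ) (x xs y ys : ℕ → ℝ) (d : ℝ) : ℝ :=
  sSup {v : ℝ | ∃ n m, n ≤ N ∧ m ≤ M ∧ v = (|x n - xs n| + |y m - ys m|) ^ d}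

/-- `max { |z_{n,m} - zs_{n,m}| : 0 ≤ n ≤ N, 0 ≤ m ≤ M }` (as an `sSup`). -/
def supValDiff (N M : ℕ) (z zs : ℕ → ℕ → ℝ) : ℝ :=
  sSup {v : ℝ | ∃ n m, n ≤ N ∧ m ≤ M ∧ v = |z n m - zs n m|}

/-- `max { |z_{i,j} - z_{k,l}| : 0 ≤ i,j,k,l ≤ N }` (as an `sSup`). -/
def supPairDiff (N : ℕ) (z : ℕ → ℕ → ℝ) : ℝ :=
  sSup {v : ℝ | ∃ i j k l, i ≤ N ∧ j ≤ N ∧ k ≤ N ∧ l ≤ N ∧ v = |z i j - z k l|}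

/-!
Under the invariance-of-ratio condition the affine map `L : S → S*` that sends `[x₀, x_N]` onto
`[x*₀, x*_N]` and `[y₀, y_M]` onto `[y*₀, y*_M]` maps every knot to the corresponding starred knot.
Hence `L ∘ (φ_n, ψ_m) = (φ*_n, ψ*_m) ∘ L`, and `p*_{n,m} ∘ L = p_{n,m}`, `q*_{n,m} ∘ L = q_{n,m}`,
because a bilinear map is determined by its values at the corners of `S`. So `G ∘ L` is a CHFIS
pair for the unstarred data, and uniqueness of the CHFIS pair (a maximum-modulus argument using
`|γ_{n,m}| < 1` and then `|α_{n,m}| < 1`) gives `F = G ∘ L` on `S`. For `P ∈ S*` this turns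
`F₁ P - G₁ P` into `F₁ P - F₁ (L⁻¹ P)`, and `L⁻¹ P` is displaced from `P` by at most the largest
displacement of a corner knot, so the Hölder bound applies; the paper's constant is at least `1`.
-/

def affineIccMap (A B A' B' X : ℝ) : ℝ := A' + (B' - A') * (X - A) / (B - A)

section affineIccMap

variable {A B A' B' : ℝ}

theorem affineIccMap_mem_Icc (hAB : A < B) (hA'B' : A' ≤ B') {X : ℝ} (hX : X ∈ Icc A B) :
    affineIccMap A B A' B' X ∈ Icc A' B' := by
  have hs₀ : 0 ≤ (X - A) / (B - A) := div_nonneg (by linarith [hX.1]) (by linarith)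
  have hs₁ : (X - A) / (B - A) ≤ 1 := (div_le_one (by linarith)).2 (by linarith [hX.2])
  simp only [affineIccMap, mul_div_assoc, mem_Icc]
  constructor <;> nlinarith

theorem affineIccMap_affineIccMap (hAB : A ≠ B) (hA'B' : A' ≠ B') (X : ℝ) :
    affineIccMap A' B' A B (affineIccMap A B A' B' X) = X := by
  have := sub_ne_zero.2 hAB.symm
  have := sub_ne_zero.2 hA'B'.symm
  simp only [affineIccMap]
  field_simp
  ring

theorem affineIccMap_comp_affineIccMap (hAB : A ≠ B) (hA'B' : A' ≠ B') (C D X : ℝ) :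
    affineIccMap A B A' B' (affineIccMap A B C D X) =
      affineIccMap A' B' (affineIccMap A B A' B' C) (affineIccMap A B A' B' D)
        (affineIccMap A B A' B' X) := by
  have := sub_ne_zero.2 hAB.symm
  have := sub_ne_zero.2 hA'B'.symm
  simp only [affineIccMap]
  field_simp
  ring

theorem abs_affineIccMap_sub_le (hAB : A < B) {X : ℝ} (hX : X ∈ Icc A B) :
    |affineIccMap A B A' B' X - X| ≤ max |A' - A| |B' - B| := by
  set s := (X - A) / (B - A) with hs
  have hs₀ : 0 ≤ s := div_nonneg (by linarith [hX.1]) (by linarith)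
  have hs₁ : s ≤ 1 := (div_le_one (by linarith)).2 (by linarith [hX.2])
  have hconvex : affineIccMap A B A' B' X - X = (1 - s) * (A' - A) + s * (B' - B) := by
    have := sub_ne_zero.2 hAB.ne'
    simp only [affineIccMap, hs]
    field_simp
    ring
  calc |affineIccMap A B A' B' X - X| = |(1 - s) * (A' - A) + s * (B' - B)| := by rw [hconvex]
    _ ≤ |(1 - s) * (A' - A)| + |s * (B' - B)| := abs_add_le _ _
    _ = (1 - s) * |A' - A| + s * |B' - B| := by
        rw [abs_mul, abs_mul, abs_of_nonneg hs₀, abs_of_nonneg (sub_nonneg.2 hs₁)]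
    _ ≤ (1 - s) * max |A' - A| |B' - B| + s * max |A' - A| |B' - B| := by
        gcongr
        exacts [le_max_left _ _, le_max_right _ _]
    _ = max |A' - A| |B' - B| := by ring

end affineIccMap

section Knots

variable {N : ℕ} {x xs : ℕ → ℝ}

theorem phiMap_eq_affineIccMap (n : ℕ) :
    phiMap N x n = affineIccMap (x 0) (x N) (x (n - 1)) (x n) :=
  rfl

theorem strictMonoOn_knots (hx : ∀ i < N, x i < x (i + 1)) : StrictMonoOn x (Iic N) :=
  strictMonoOn_Iic_of_lt_succ fun i hi => by simpa using hx i hi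

theorem knot_zero_lt_last (hN : 1 ≤ N) (hx : ∀ i < N, x i < x (i + 1)) : x 0 < x N :=
  strictMonoOn_knots hx (Nat.zero_le N) (le_refl N) (by omega)

theorem knot_pred_lt (hx : ∀ i < N, x i < x (i + 1)) {n : ℕ} (hn : 1 ≤ n) (hnN : n ≤ N) :
    x (n - 1) < x n :=
  strictMonoOn_knots hx (show n - 1 ≤ N by omega) hnN (by omega)

theorem exists_phiMap_eq (hN : 1 ≤ N) (hx : ∀ i < N, x i < x (i + 1)) {X : ℝ}
    (hX : X ∈ Icc (x 0) (x N)) :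
    ∃ n, 1 ≤ n ∧ n ≤ N ∧ ∃ X' ∈ Icc (x 0) (x N), phiMap N x n X' = X := by
  classical
  have hex : ∃ k, 1 ≤ k ∧ X ≤ x k := ⟨N, hN, hX.2⟩
  set n := Nat.find hex
  obtain ⟨hn, hXn⟩ : 1 ≤ n ∧ X ≤ x n := Nat.find_spec hex
  have hnN : n ≤ N := Nat.find_min' hex ⟨hN, hX.2⟩
  have hXn' : x (n - 1) ≤ X := by
    rcases hn.eq_or_lt with h | h
    · rw [← h]
      exact hX.1
    · exact le_of_not_ge fun hle => Nat.find_min hex (by omega) ⟨by omega, hle⟩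
  have hcell := knot_pred_lt hx hn hnN
  have hx0N := knot_zero_lt_last hN hx
  refine ⟨n, hn, hnN, _, affineIccMap_mem_Icc hcell hx0N.le ⟨hXn', hXn⟩, ?_⟩
  rw [phiMap_eq_affineIccMap]
  exact affineIccMap_affineIccMap hcell.ne hx0N.ne X

theorem affineIccMap_knot (hN : 1 ≤ N) (hx : ∀ i < N, x i < x (i + 1))
    (hxs : ∀ i < N, xs i < xs (i + 1))
    (hratio : ∀ n, 1 ≤ n → n ≤ N →
      (x 0 - x N) / (xs 0 - xs N) = (x (n - 1) - x n) / (xs (n - 1) - xs n)) :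
    ∀ i ≤ N, affineIccMap (x 0) (x N) (xs 0) (xs N) (x i) = xs i := by
  have hx0N := sub_ne_zero.2 (knot_zero_lt_last hN hx).ne'
  have hxs0N := sub_ne_zero.2 (knot_zero_lt_last hN hxs).ne
  intro i hi
  induction i with
  | zero => simp [affineIccMap]
  | succ i ih =>
    have hstep := hratio (i + 1) (by omega) hi
    have hxsi := sub_ne_zero.2 (hxs i (by omega)).ne
    rw [Nat.add_sub_cancel, div_eq_div_iff hxs0N hxsi] at hstep
    have ih := ih (by omega)
    simp only [affineIccMap] at ih ⊢
    field_simp at ih ⊢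
    linear_combination ih - hstep

theorem affineIccMap_phiMap (hN : 1 ≤ N) (hx : ∀ i < N, x i < x (i + 1))
    (hxs : ∀ i < N, xs i < xs (i + 1))
    (hknot : ∀ i ≤ N, affineIccMap (x 0) (x N) (xs 0) (xs N) (x i) = xs i)
    {n : ℕ} (hn : 1 ≤ n) (hnN : n ≤ N) (X : ℝ) :
    affineIccMap (x 0) (x N) (xs 0) (xs N) (phiMap N x n X) =
      phiMap N xs n (affineIccMap (x 0) (x N) (xs 0) (xs N) X) := by
  rw [phiMap_eq_affineIccMap, phiMap_eq_affineIccMap, affineIccMap_comp_affineIccMap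
    (knot_zero_lt_last hN hx).ne (knot_zero_lt_last hN hxs).ne, hknot n hnN, hknot (n - 1) (by omega)]

end Knots

theorem eqOn_zero_of_abs_le_mul_abs {α : Type*} [TopologicalSpace α] {S : Set α}
    (hS : IsCompact S) {D : α → ℝ} (hD : ContinuousOn D S)
    (h : ∀ P ∈ S, ∃ Q ∈ S, ∃ k, 0 ≤ k ∧ k < 1 ∧ |D P| ≤ k * |D Q|) : EqOn D 0 S := by
  intro P hP
  obtain ⟨P₀, hP₀, hmax⟩ := hS.exists_isMaxOn ⟨P, hP⟩ hD.abs
  obtain ⟨Q, hQ, k, hk₀, hk₁, hle⟩ := h P₀ hP₀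
  have hQP₀ : |D Q| ≤ |D P₀| := hmax hQ
  have hPP₀ : |D P| ≤ |D P₀| := hmax hP
  have hP₀ : |D P₀| ≤ 0 := by nlinarith [abs_nonneg (D Q)]
  exact abs_nonpos_iff.1 (hPP₀.trans hP₀)

section CHFIS

variable {N M : ℕ} {x y xs ys : ℕ → ℝ} {z t : ℕ → ℕ → ℝ} {a b c : ℕ → ℕ → ℝ}

theorem pMap_affineIccMap (hx : x 0 ≠ x N) (hy : y 0 ≠ y M) (hxs : xs 0 ≠ xs N)
    (hys : ys 0 ≠ ys M) (n m : ℕ) (X Y : ℝ) :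
    pMap N M xs ys z t a b n m (affineIccMap (x 0) (x N) (xs 0) (xs N) X)
      (affineIccMap (y 0) (y M) (ys 0) (ys M) Y) = pMap N M x y z t a b n m X Y := by
  have := sub_ne_zero.2 hx
  have := sub_ne_zero.2 hy
  have := sub_ne_zero.2 hxs
  have := sub_ne_zero.2 hys
  have := sub_ne_zero.2 hx.symm
  have := sub_ne_zero.2 hy.symm
  simp only [pMap, eCoef, fCoef, gCoef, kCoef, affineIccMap]
  field_simp
  ring

theorem IsCHFIS.comp_affineIccMap (hD : DataOK N M x y a b c) (hDs : DataOK N M xs ys a b c)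
    (hratio : RatioInv N M x y xs ys) {G₁ G₂ : ℝ → ℝ → ℝ}
    (hG : IsCHFIS N M xs ys z t a b c G₁ G₂) :
    IsCHFIS N M x y z t a b c
      (fun X Y => G₁ (affineIccMap (x 0) (x N) (xs 0) (xs N) X)
        (affineIccMap (y 0) (y M) (ys 0) (ys M) Y))
      (fun X Y => G₂ (affineIccMap (x 0) (x N) (xs 0) (xs N) X)
        (affineIccMap (y 0) (y M) (ys 0) (ys M) Y)) := by
  obtain ⟨hG₁, hG₂, hGknots, hGeq⟩ := hG
  have hx := knot_zero_lt_last hD.hN hD.hx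
  have hy := knot_zero_lt_last hD.hM hD.hy
  have hxs := knot_zero_lt_last hDs.hN hDs.hx
  have hys := knot_zero_lt_last hDs.hM hDs.hy
  have hknotx := affineIccMap_knot hD.hN hD.hx hDs.hx hratio.1
  have hknoty := affineIccMap_knot hD.hM hD.hy hDs.hy hratio.2
  set L : ℝ × ℝ → ℝ × ℝ := fun P => (affineIccMap (x 0) (x N) (xs 0) (xs N) P.1,
    affineIccMap (y 0) (y M) (ys 0) (ys M) P.2)
  have hLcont : Continuous L := by
    simp only [L, affineIccMap]
    fun_prop
  have hLmaps : MapsTo L (Icc (x 0) (x N) ×ˢ Icc (y 0) (y M))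
      (Icc (xs 0) (xs N) ×ˢ Icc (ys 0) (ys M)) := fun P hP =>
    ⟨affineIccMap_mem_Icc hx hxs.le hP.1, affineIccMap_mem_Icc hy hys.le hP.2⟩
  refine ⟨hG₁.comp hLcont.continuousOn hLmaps, hG₂.comp hLcont.continuousOn hLmaps,
    fun i hi j hj => ?_, fun n m hn hnN hm hmM X hX Y hY => ?_⟩
  · beta_reduce
    rw [hknotx i hi, hknoty j hj]
    exact hGknots i hi j hj
  · have hLX := affineIccMap_mem_Icc hx hxs.le hX
    have hLY := affineIccMap_mem_Icc hy hys.le hY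
    beta_reduce
    rw [affineIccMap_phiMap hD.hN hD.hx hDs.hx hknotx hn hnN,
      affineIccMap_phiMap hD.hM hD.hy hDs.hy hknoty hm hmM,
      (hGeq n m hn hnN hm hmM _ hLX _ hLY).1, (hGeq n m hn hnN hm hmM _ hLX _ hLY).2, qMap, qMap,
      pMap_affineIccMap hx.ne hy.ne hxs.ne hys.ne, pMap_affineIccMap hx.ne hy.ne hxs.ne hys.ne]
    exact ⟨rfl, rfl⟩

theorem IsCHFIS.eq_of_isCHFIS (hD : DataOK N M x y a b c) {F₁ F₂ H₁ H₂ : ℝ → ℝ → ℝ}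
    (hF : IsCHFIS N M x y z t a b c F₁ F₂) (hH : IsCHFIS N M x y z t a b c H₁ H₂) :
    ∀ X ∈ Icc (x 0) (x N), ∀ Y ∈ Icc (y 0) (y M), F₁ X Y = H₁ X Y := by
  set S := Icc (x 0) (x N) ×ˢ Icc (y 0) (y M)
  have hS : IsCompact S := isCompact_Icc.prod isCompact_Icc
  have hcell : ∀ P ∈ S, ∃ n m, 1 ≤ n ∧ n ≤ N ∧ 1 ≤ m ∧ m ≤ M ∧ ∃ Q ∈ S,
      F₁ P.1 P.2 - H₁ P.1 P.2 =
        a n m * (F₁ Q.1 Q.2 - H₁ Q.1 Q.2) + b n m * (F₂ Q.1 Q.2 - H₂ Q.1 Q.2) ∧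
      F₂ P.1 P.2 - H₂ P.1 P.2 = c n m * (F₂ Q.1 Q.2 - H₂ Q.1 Q.2) := by
    rintro ⟨X, Y⟩ ⟨hX, hY⟩
    obtain ⟨n, hn, hnN, X', hX', rfl⟩ := exists_phiMap_eq hD.hN hD.hx hX
    obtain ⟨m, hm, hmM, Y', hY', rfl⟩ := exists_phiMap_eq hD.hM hD.hy hY
    obtain ⟨hF₁, hF₂⟩ := hF.2.2.2 n m hn hnN hm hmM X' hX' Y' hY'
    obtain ⟨hH₁, hH₂⟩ := hH.2.2.2 n m hn hnN hm hmM X' hX' Y' hY'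
    exact ⟨n, m, hn, hnN, hm, hmM, (X', Y'), ⟨hX', hY'⟩, by rw [hF₁, hH₁]; ring,
      by rw [hF₂, hH₂]; ring⟩
  have h₂ : EqOn (fun P : ℝ × ℝ => F₂ P.1 P.2 - H₂ P.1 P.2) 0 S :=
    eqOn_zero_of_abs_le_mul_abs hS (hF.2.1.sub hH.2.1) fun P hP => by
      obtain ⟨n, m, hn, hnN, hm, hmM, Q, hQ, -, hdiff⟩ := hcell P hP
      refine ⟨Q, hQ, |c n m|, abs_nonneg _, ?_, by rw [hdiff, abs_mul]⟩
      linarith [hD.hbc n m hn hnN hm hmM, abs_nonneg (b n m)]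
  have h₁ : EqOn (fun P : ℝ × ℝ => F₁ P.1 P.2 - H₁ P.1 P.2) 0 S :=
    eqOn_zero_of_abs_le_mul_abs hS (hF.1.sub hH.1) fun P hP => by
      obtain ⟨n, m, hn, hnN, hm, hmM, Q, hQ, hdiff, -⟩ := hcell P hP
      refine ⟨Q, hQ, |a n m|, abs_nonneg _, hD.ha n m hn hnN hm hmM, ?_⟩
      have hQ₂ : F₂ Q.1 Q.2 - H₂ Q.1 Q.2 = 0 := h₂ hQ
      rw [hdiff, hQ₂, mul_zero, add_zero, abs_mul]
  intro X hX Y hY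
  exact sub_eq_zero.1 (h₁ (mk_mem_prod hX hY))

end CHFIS

section Suprema

variable {N M : ℕ}

theorem supParam_nonneg (N M : ℕ) (a : ℕ → ℕ → ℝ) : 0 ≤ supParam N M a :=
  Real.sSup_nonneg (by rintro _ ⟨n, m, -, -, -, -, rfl⟩; exact abs_nonneg _)

theorem supParam_lt (hN : 1 ≤ N) (hM : 1 ≤ M) {a : ℕ → ℕ → ℝ} {r : ℝ}
    (h : ∀ n m, 1 ≤ n → n ≤ N → 1 ≤ m → m ≤ M → |a n m| < r) : supParam N M a < r := by
  have hfin : {v : ℝ | ∃ n m, 1 ≤ n ∧ n ≤ N ∧ 1 ≤ m ∧ m ≤ M ∧ v = |a n m|}.Finite :=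
    (((finite_Icc 1 N).prod (finite_Icc 1 M)).image fun p => |a p.1 p.2|).subset
      (by rintro _ ⟨n, m, hn, hnN, hm, hmM, rfl⟩; exact ⟨(n, m), ⟨⟨hn, hnN⟩, hm, hmM⟩, rfl⟩)
  refine (hfin.csSup_lt_iff ⟨_, 1, 1, le_rfl, hN, le_rfl, hM, rfl⟩).2 ?_
  rintro _ ⟨n, m, hn, hnN, hm, hmM, rfl⟩
  exact h n m hn hnN hm hmM

theorem le_supKnotDiff (x xs y ys : ℕ → ℝ) (d : ℝ) {n m : ℕ} (hn : n ≤ N) (hm : m ≤ M) :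
    (|x n - xs n| + |y m - ys m|) ^ d ≤ supKnotDiff N M x xs y ys d := by
  have hfin : {v : ℝ | ∃ n m, n ≤ N ∧ m ≤ M ∧ v = (|x n - xs n| + |y m - ys m|) ^ d}.Finite :=
    (((finite_Iic N).prod (finite_Iic M)).image
      fun p => (|x p.1 - xs p.1| + |y p.2 - ys p.2|) ^ d).subset
      (by rintro _ ⟨n, m, hn, hm, rfl⟩; exact ⟨(n, m), ⟨hn, hm⟩, rfl⟩)
  exact le_csSup hfin.bddAbove ⟨n, m, hn, hm, rfl⟩

end Suprema

theorem one_le_stability_const {α β γ : ℝ} (hα₀ : 0 ≤ α) (hα₁ : α < 1) (hβ : 0 ≤ β)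
    (hγ₀ : 0 ≤ γ) (hγ₁ : γ < 1) :
    1 ≤ 2 * β * γ / ((1 - α) * (1 - γ)) + (1 + α) / (1 - α) := by
  have h₁ : 0 ≤ 2 * β * γ / ((1 - α) * (1 - γ)) :=
    div_nonneg (by positivity) (mul_nonneg (by linarith) (by linarith))
  have h₂ : 1 ≤ (1 + α) / (1 - α) := (le_div_iff₀ (by linarith)).2 (by linarith)
  linarith

theorem exists_abs_sub_affineIccMap_le {N : ℕ} {x xs : ℕ → ℝ} (hxs : xs 0 < xs N) {X : ℝ}
    (hX : X ∈ Icc (xs 0) (xs N)) :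
    ∃ n ≤ N, |X - affineIccMap (xs 0) (xs N) (x 0) (x N) X| ≤ |x n - xs n| := by
  rw [abs_sub_comm]
  rcases le_max_iff.1 (abs_affineIccMap_sub_le (A' := x 0) (B' := x N) hxs hX) with h | h
  · exact ⟨0, Nat.zero_le N, h⟩
  · exact ⟨N, le_rfl, h⟩

theorem chfis_stability_indep_general (N M : ℕ) (x y xs ys : ℕ → ℝ) (z t : ℕ → ℕ → ℝ)
    (a b c : ℕ → ℕ → ℝ)
    (hD : DataOK N M x y a b c) (hDs : DataOK N M xs ys a b c)
    (hratio : RatioInv N M x y xs ys)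
    (hsub : Icc (xs 0) (xs N) ×ˢ Icc (ys 0) (ys M) ⊆ Icc (x 0) (x N) ×ˢ Icc (y 0) (y M))
    (F₁ F₂ G₁ G₂ : ℝ → ℝ → ℝ)
    (hF : IsCHFIS N M x y z t a b c F₁ F₂)
    (hG : IsCHFIS N M xs ys z t a b c G₁ G₂)
    (Mb δ : ℝ) (hMb : 0 ≤ Mb) (hδ : δ ∈ Set.Ioc (0:ℝ) 1)
    (hH1 : ∀ X ∈ Icc (x 0) (x N), ∀ Y ∈ Icc (y 0) (y M),
      ∀ X' ∈ Icc (x 0) (x N), ∀ Y' ∈ Icc (y 0) (y M),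
        |F₁ X Y - F₁ X' Y'| ≤ Mb * (|X - X'| + |Y - Y'|) ^ δ) :
    ∀ X ∈ Icc (xs 0) (xs N), ∀ Y ∈ Icc (ys 0) (ys M),
      |F₁ X Y - G₁ X Y| ≤
        Mb * (2 * supParam N M b * supParam N M c
              / ((1 - supParam N M a) * (1 - supParam N M c))
            + (1 + supParam N M a) / (1 - supParam N M a))
          * supKnotDiff N M x xs y ys δ := by
  intro X hX Y hY
  have hx := knot_zero_lt_last hD.hN hD.hx
  have hy := knot_zero_lt_last hD.hM hD.hy
  have hxs := knot_zero_lt_last hDs.hN hDs.hx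
  have hys := knot_zero_lt_last hDs.hM hDs.hy
  set X₀ := affineIccMap (xs 0) (xs N) (x 0) (x N) X
  set Y₀ := affineIccMap (ys 0) (ys M) (y 0) (y M) Y
  have hX₀ : X₀ ∈ Icc (x 0) (x N) := affineIccMap_mem_Icc hxs hx.le hX
  have hY₀ : Y₀ ∈ Icc (y 0) (y M) := affineIccMap_mem_Icc hys hy.le hY
  have hFG : F₁ X₀ Y₀ = G₁ X Y := by
    have := hF.eq_of_isCHFIS hD (hG.comp_affineIccMap hD hDs hratio) X₀ hX₀ Y₀ hY₀
    rwa [affineIccMap_affineIccMap hxs.ne hx.ne, affineIccMap_affineIccMap hys.ne hy.ne] at this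
  obtain ⟨n, hn, hXn⟩ := exists_abs_sub_affineIccMap_le (x := x) hxs hX
  obtain ⟨m, hm, hYm⟩ := exists_abs_sub_affineIccMap_le (x := y) hys hY
  have hK : 0 ≤ supKnotDiff N M x xs y ys δ :=
    (rpow_nonneg (by positivity) δ).trans (le_supKnotDiff x xs y ys δ hn hm)
  have hC := one_le_stability_const (supParam_nonneg N M a)
    (supParam_lt hD.hN hD.hM hD.ha) (supParam_nonneg N M b) (supParam_nonneg N M c)
    (supParam_lt hD.hN hD.hM fun n m hn hnN hm hmM => by
      linarith [hD.hbc n m hn hnN hm hmM, abs_nonneg (b n m)])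
  obtain ⟨hXS, hYS⟩ := hsub (mk_mem_prod hX hY)
  calc |F₁ X Y - G₁ X Y| = |F₁ X Y - F₁ X₀ Y₀| := by rw [hFG]
    _ ≤ Mb * (|X - X₀| + |Y - Y₀|) ^ δ := hH1 X hXS Y hYS X₀ hX₀ Y₀ hY₀
    _ ≤ Mb * (|x n - xs n| + |y m - ys m|) ^ δ := by gcongr; exact hδ.1.le
    _ ≤ Mb * supKnotDiff N M x xs y ys δ := by gcongr; exact le_supKnotDiff x xs y ys δ hn hm
    _ ≤ _ := by
      rw [mul_right_comm]
      exact le_mul_of_one_le_right (mul_nonneg hMb hK) hC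

/-- stability of CHFIS with respect to perturbation of the independent
variables (knots), under the invariance-of-ratio condition and `S* ⊆ S`. -/
theorem chfis_stability_indep (N M : ℕ) (x y xs ys : ℕ → ℝ) (z t : ℕ → ℕ → ℝ)
    (a b c : ℕ → ℕ → ℝ)
    (hD : DataOK N M x y a b c) (hDs : DataOK N M xs ys a b c)
    (hratio : RatioInv N M x y xs ys)
    (hsub : Icc (xs 0) (xs N) ×ˢ Icc (ys 0) (ys M) ⊆ Icc (x 0) (x N) ×ˢ Icc (y 0) (y M))
    (F₁ F₂ G₁ G₂ : ℝ → ℝ → ℝ)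
    (hF : IsCHFIS N M x y z t a b c F₁ F₂)
    (hG : IsCHFIS N M xs ys z t a b c G₁ G₂)
    (Mb δ : ℝ) (hMb : 0 ≤ Mb) (hδ : δ ∈ Set.Ioc (0:ℝ) 1)
    (hH1 : ∀ X ∈ Icc (x 0) (x N), ∀ Y ∈ Icc (y 0) (y M),
      ∀ X' ∈ Icc (x 0) (x N), ∀ Y' ∈ Icc (y 0) (y M),
        |F₁ X Y - F₁ X' Y'| ≤ Mb * (|X - X'| + |Y - Y'|) ^ δ)
    (hH2 : ∀ X ∈ Icc (x 0) (x N), ∀ Y ∈ Icc (y 0) (y M),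
      ∀ X' ∈ Icc (x 0) (x N), ∀ Y' ∈ Icc (y 0) (y M),
        |F₂ X Y - F₂ X' Y'| ≤ Mb * (|X - X'| + |Y - Y'|) ^ δ) :
    ∀ X ∈ Icc (xs 0) (xs N), ∀ Y ∈ Icc (ys 0) (ys M),
      |F₁ X Y - G₁ X Y| ≤
        Mb * (2 * supParam N M b * supParam N M c
              / ((1 - supParam N M a) * (1 - supParam N M c))
            + (1 + supParam N M a) / (1 - supParam N M a))
          * supKnotDiff N M x xs y ys δ :=
  chfis_stability_indep_general N M x y xs ys z t a b c hD hDs hratio hsub F₁ F₂ G₁ G₂ hF hG Mb δ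
    hMb hδ hH1
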